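/- arXiv:2302.14499 — 4 statements merged into one kernel-verified Lean document; each statement's English description precedes it below -/
import Mathlib

section
/- Let G be a linearly reductive group acting rationally on a finitely generated k-algebra A. Then the invariant ring A^G is a finitely generated k-algebra. -/
namespace Stmt7

/-- The subalgebra of invariants `A^G` of a group acting `k`-linearly on a `k`-algebra
by ring automorphisms. -/
def fixedSubalgebra (k G A : Type) [CommSemiring k] [Group G] [CommRing A]
    [Algebra k A] [MulSemiringAction G A] [SMulCommClass G k A] : Subalgebra k A where
  carrier := {a | ∀ g : G, g • a = a}
  mul_mem' := by intro a b ha hb g; rw [smul_mul', ha g, hb g]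
  add_mem' := by intro a b ha hb g; rw [smul_add, ha g, hb g]
  algebraMap_mem' := by
    intro c g
    rw [Algebra.algebraMap_eq_smul_one, smul_comm, smul_one]


set_option linter.unusedSectionVars false
set_option linter.unnecessarySimpa false
set_option maxHeartbeats 1000000

/-- Linear reductivity of `G` over `k`. -/
def LinRed (k G : Type) [Field k] [Group G] : Prop :=
  ∀ (V : Type) [AddCommGroup V] [Module k V] [DistribMulAction G V]
    [SMulCommClass G k V], FiniteDimensional k V →
    ∀ W : Submodule k V, (∀ g : G, ∀ w ∈ W, g • w ∈ W) →
      ∃ W' : Submodule k V, (∀ g : G, ∀ w ∈ W', g • w ∈ W') ∧ IsCompl W W'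

/-- Rationality of the action of `G` on `A`. -/
def Rational (k G A : Type) [Field k] [Group G] [CommRing A] [Algebra k A]
    [MulSemiringAction G A] : Prop :=
  ∀ a : A, ∃ W : Submodule k A, a ∈ W ∧ FiniteDimensional k W ∧
    ∀ g : G, ∀ w ∈ W, g • w ∈ W

section Reynolds

variable (k G A : Type) [Field k] [Group G] [CommRing A] [Algebra k A]
  [MulSemiringAction G A] [SMulCommClass G k A]

/-- The submodule spanned by all `g • a - a`. -/
def aug : Submodule k A := Submodule.span k {x | ∃ g : G, ∃ a : A, x = g • a - a}

variable {k G A}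

lemma mem_aug_of (g : G) (a : A) : g • a - a ∈ aug k G A :=
  Submodule.subset_span ⟨g, a, rfl⟩

lemma fixed_mul_aug {r u : A} (hr : r ∈ fixedSubalgebra k G A) (hu : u ∈ aug k G A) :
    r * u ∈ aug k G A := by
  induction hu using Submodule.span_induction with
  | mem x hx =>
      obtain ⟨g, a, rfl⟩ := hx
      have h : r * (g • a - a) = g • (r * a) - r * a := by
        rw [smul_mul', hr g]; ring
      rw [h]; exact mem_aug_of g (r * a)
  | zero => simpa using (aug k G A).zero_mem
  | add x y _ _ hx hy => rw [mul_add]; exact add_mem hx hy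
  | smul c x _ hx => rw [mul_smul_comm]; exact Submodule.smul_mem _ c hx

lemma perW (hLR : LinRed k G) (W : Submodule k A) (hfd : FiniteDimensional k W)
    (hW : ∀ g : G, ∀ w ∈ W, g • w ∈ W) :
    (∀ a ∈ W, ∃ r ∈ fixedSubalgebra k G A, a - r ∈ aug k G A) ∧
      (∀ x ∈ Submodule.span k {y | ∃ g : G, ∃ w ∈ W, y = g • w - w},
        (∀ g : G, g • x = x) → x = 0) := by
  letI : SMul G W := ⟨fun g w => ⟨g • (w : A), hW g _ w.2⟩⟩
  have hcoe : ∀ (g : G) (w : W), ((g • w : W) : A) = g • (w : A) := fun _ _ => rfl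
  letI : MulAction G W :=
    { one_smul := fun w => Subtype.ext (by rw [hcoe]; exact one_smul G _)
      mul_smul := fun g h w => Subtype.ext (by simp only [hcoe]; exact mul_smul g h _) }
  letI : DistribMulAction G W :=
    { smul_zero := fun g => Subtype.ext (by rw [hcoe]; exact smul_zero g)
      smul_add := fun g x y => Subtype.ext
        (by simp only [hcoe, Submodule.coe_add]; exact smul_add g (x : A) (y : A)) }
  letI : SMulCommClass G k W := ⟨fun g c w => Subtype.ext
    (by simp only [hcoe, SetLike.val_smul]; exact smul_comm g c (w : A))⟩
  set augW : Submodule k W :=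
    Submodule.span k {x : W | ∃ g : G, ∃ w : W, x = g • w - w} with haugW
  have hgen : ∀ (g : G) (w : W), g • w - w ∈ augW := fun g w =>
    Submodule.subset_span ⟨g, w, rfl⟩
  have haug_stable : ∀ g : G, ∀ x ∈ augW, g • x ∈ augW := by
    intro g x hx
    induction hx using Submodule.span_induction with
    | mem y hy =>
        obtain ⟨h, w, rfl⟩ := hy
        have he : g • (h • w - w) = ((g * h) • w - w) - (g • w - w) := by
          rw [smul_sub, mul_smul]; abel
        rw [he]; exact sub_mem (hgen _ w) (hgen _ w)
    | zero => rw [smul_zero]; exact zero_mem _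
    | add x y _ _ hx hy => rw [smul_add]; exact add_mem hx hy
    | smul c x _ hx => rw [smul_comm]; exact Submodule.smul_mem _ c hx
  have hmapaug : ∀ u ∈ augW, (u : A) ∈ aug k G A := by
    intro u hu
    induction hu using Submodule.span_induction with
    | mem x hx =>
        obtain ⟨g, w, rfl⟩ := hx
        simpa [hcoe] using mem_aug_of g (w : A)
    | zero => simpa using (aug k G A).zero_mem
    | add x y _ _ hx hy => simpa using add_mem hx hy
    | smul c x _ hx => simpa using Submodule.smul_mem _ c hx
  constructor
  · obtain ⟨C, hCstab, hCcompl⟩ := hLR W hfd augW haug_stable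
    have hCfix : ∀ c ∈ C, ∀ g : G, g • c = c := by
      intro c hc g
      have h1 : g • c - c ∈ C := sub_mem (hCstab g c hc) hc
      have h0 : g • c - c = 0 :=
        Submodule.disjoint_def.mp hCcompl.disjoint _ (hgen g c) h1
      exact sub_eq_zero.mp h0
    intro a ha
    have hmem : (⟨a, ha⟩ : W) ∈ augW ⊔ C := by rw [hCcompl.sup_eq_top]; trivial
    obtain ⟨u, hu, c, hc, huc⟩ := Submodule.mem_sup.mp hmem
    refine ⟨(c : A), fun g => ?_, ?_⟩
    · rw [← hcoe, hCfix c hc g]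
    · have h : a - (c : A) = (u : A) := by
        have := congrArg Subtype.val huc
        simp only [Submodule.coe_add] at this
        rw [← this]; ring
      rw [h]; exact hmapaug u hu
  · have hspan : Submodule.span k {y | ∃ g : G, ∃ w ∈ W, y = g • w - w} ≤
        Submodule.map W.subtype augW := by
      apply Submodule.span_le.mpr
      rintro y ⟨g, w, hw, rfl⟩
      exact Submodule.mem_map.mpr ⟨g • ⟨w, hw⟩ - ⟨w, hw⟩, hgen g ⟨w, hw⟩, by simp [hcoe]⟩
    intro x hx hfix
    obtain ⟨u, hu, rfl⟩ := Submodule.mem_map.mp (hspan hx)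
    have hufix : ∀ g : G, g • u = u := fun g => Subtype.ext (by rw [hcoe]; exact hfix g)
    set D : Submodule k W := augW ⊓
      ({ carrier := {w : W | ∀ g : G, g • w = w}
         zero_mem' := fun g => smul_zero g
         add_mem' := fun {x y} hx hy g => by rw [smul_add, hx g, hy g]
         smul_mem' := fun c w hw g => by rw [smul_comm, hw g] } : Submodule k W) with hD
    have hDstab : ∀ g : G, ∀ d ∈ D, g • d ∈ D := by
      intro g d hd
      rw [hd.2 g]; exact hd
    obtain ⟨C₂, hC₂stab, hC₂compl⟩ := hLR W hfd D hDstab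
    have haugC₂ : augW ≤ C₂ := by
      rw [haugW]
      apply Submodule.span_le.mpr
      rintro _ ⟨g, w, rfl⟩
      have hw : w ∈ D ⊔ C₂ := by rw [hC₂compl.sup_eq_top]; trivial
      obtain ⟨d, hd, c, hc, rfl⟩ := Submodule.mem_sup.mp hw
      have he : g • (d + c) - (d + c) = g • c - c := by
        rw [smul_add, hd.2 g]; abel
      rw [he]
      exact sub_mem (hC₂stab g c hc) hc
    have hu0 : u = 0 :=
      Submodule.disjoint_def.mp hC₂compl.disjoint u ⟨hu, hufix⟩ (haugC₂ hu)
    rw [hu0]; rfl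

lemma sup_stable₂ {W₁ W₂ : Submodule k A} (h₁ : ∀ g : G, ∀ w ∈ W₁, g • w ∈ W₁)
    (h₂ : ∀ g : G, ∀ w ∈ W₂, g • w ∈ W₂) : ∀ g : G, ∀ w ∈ W₁ ⊔ W₂, g • w ∈ W₁ ⊔ W₂ := by
  intro g w hw
  obtain ⟨x, hx, y, hy, rfl⟩ := Submodule.mem_sup.mp hw
  rw [smul_add]
  exact Submodule.add_mem_sup (h₁ g x hx) (h₂ g y hy)

lemma finset_sup_stable {ι : Type*} (s : Finset ι) (f : ι → Submodule k A)
    (h : ∀ i, ∀ g : G, ∀ w ∈ f i, g • w ∈ f i) :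
    ∀ g : G, ∀ w ∈ s.sup f, g • w ∈ s.sup f := by
  classical
  induction s using Finset.induction_on with
  | empty => intro g w hw; simp_all [Finset.sup_empty]
  | insert a s hx ih =>
      rw [Finset.sup_insert]
      exact sup_stable₂ (h a) ih

theorem reynolds (hLR : LinRed k G) (hrat : Rational k G A) :
    (∀ a : A, ∃ r ∈ fixedSubalgebra k G A, a - r ∈ aug k G A) ∧
      (∀ x ∈ aug k G A, (∀ g : G, g • x = x) → x = 0) := by
  classical
  constructor
  · intro a
    obtain ⟨W, haW, hfd, hst⟩ := hrat a
    exact (perW hLR W hfd hst).1 a haW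
  · intro x hx hfix
    obtain ⟨m, c, y, hsum⟩ := Submodule.mem_span_set'.mp hx
    choose g a ha using fun i : Fin m => (y i).2
    choose Wf hmem hfd hstab using hrat
    set Wb : Submodule k A := Finset.univ.sup (fun i : Fin m => Wf (a i)) with hWb
    haveI : ∀ i : Fin m, FiniteDimensional k (Wf (a i)) := fun i => hfd (a i)
    haveI hWbfd : FiniteDimensional k Wb :=
      Submodule.finiteDimensional_finset_sup _ _
    have hWbstab : ∀ g' : G, ∀ w ∈ Wb, g' • w ∈ Wb :=
      finset_sup_stable _ _ (fun i => hstab (a i))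
    have hxmem : x ∈ Submodule.span k {z | ∃ g' : G, ∃ w ∈ Wb, z = g' • w - w} := by
      rw [← hsum]
      apply Submodule.sum_mem
      intro i _
      apply Submodule.smul_mem
      apply Submodule.subset_span
      refine ⟨g i, a i, ?_, ha i⟩
      have hle : Wf (a i) ≤ Wb :=
        Finset.le_sup (f := fun i : Fin m => Wf (a i)) (Finset.mem_univ i)
      exact hle (hmem (a i))
    exact (perW hLR Wb hWbfd hWbstab).2 x hxmem hfix

end Reynolds

lemma exists_finset_span {R M : Type*} [Semiring R] [AddCommMonoid M] [Module R M]
    (S : Set M) (h : (Submodule.span R S).FG) :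
    ∃ T : Finset M, ↑T ⊆ S ∧ Submodule.span R (T : Set M) = Submodule.span R S := by
  classical
  obtain ⟨t, ht⟩ := h
  choose f hf1 hf2 using fun x : t =>
    Submodule.mem_span_finite_of_mem_span (S := S) (x := (x : M))
      (ht ▸ Submodule.subset_span x.2)
  refine ⟨t.attach.biUnion f, ?_, le_antisymm ?_ ?_⟩
  · intro y hy
    simp only [Finset.coe_biUnion, Set.mem_iUnion, Finset.mem_coe] at hy
    obtain ⟨x, _, hx⟩ := hy
    exact hf1 x hx
  · apply Submodule.span_le.mpr
    intro y hy
    simp only [Finset.coe_biUnion, Set.mem_iUnion, Finset.mem_coe] at hy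
    obtain ⟨x, _, hx⟩ := hy
    exact Submodule.subset_span (hf1 x hx)
  · rw [← ht]
    apply Submodule.span_le.mpr
    intro y hy
    refine Submodule.span_mono ?_ (hf2 ⟨y, hy⟩)
    intro z hz
    simp only [Finset.coe_biUnion, Set.mem_iUnion, Finset.mem_coe]
    exact ⟨⟨y, hy⟩, Finset.mem_attach _ _, hz⟩

section Poly

open MvPolynomial

variable {k G : Type} [Field k] [Group G] {n : ℕ}
variable [MulSemiringAction G (MvPolynomial (Fin n) k)]
  [SMulCommClass G k (MvPolynomial (Fin n) k)]

variable (hdeg : ∀ (g : G) (d : ℕ) (p : MvPolynomial (Fin n) k),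
  p.IsHomogeneous d → (g • p).IsHomogeneous d)

include hdeg

lemma comp_equivariant (g : G) (i : ℕ) (p : MvPolynomial (Fin n) k) :
    g • homogeneousComponent i p = homogeneousComponent i (g • p) := by
  conv_rhs => rw [← MvPolynomial.sum_homogeneousComponent p]
  rw [Finset.smul_sum, map_sum]
  have hterm : ∀ j, homogeneousComponent i (g • homogeneousComponent j p) =
      if i = j then g • homogeneousComponent j p else 0 := fun j =>
    homogeneousComponent_of_mem
      ((mem_homogeneousSubmodule _ _).mpr (hdeg g j _ (homogeneousComponent_isHomogeneous j p)))
  simp_rw [hterm]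
  rw [Finset.sum_ite_eq]
  split_ifs with h
  · rfl
  · rw [MvPolynomial.homogeneousComponent_eq_zero, smul_zero]
    simpa using h

lemma comp_mem_fixed {p : MvPolynomial (Fin n) k}
    (hp : p ∈ fixedSubalgebra k G (MvPolynomial (Fin n) k)) (i : ℕ) :
    homogeneousComponent i p ∈ fixedSubalgebra k G (MvPolynomial (Fin n) k) := by
  intro g
  rw [comp_equivariant hdeg, hp g]

lemma comp_aug {x : MvPolynomial (Fin n) k} (hx : x ∈ aug k G (MvPolynomial (Fin n) k)) (i : ℕ) :
    homogeneousComponent i x ∈ aug k G (MvPolynomial (Fin n) k) := by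
  induction hx using Submodule.span_induction with
  | mem y hy =>
      obtain ⟨g, a, rfl⟩ := hy
      rw [map_sub, ← comp_equivariant hdeg]
      exact mem_aug_of g _
  | zero => rw [map_zero]; exact zero_mem _
  | add a b _ _ ha hb => rw [map_add]; exact add_mem ha hb
  | smul c a _ ha => rw [map_smul]; exact Submodule.smul_mem _ c ha

lemma homogR1
    (R1 : ∀ p : MvPolynomial (Fin n) k, ∃ r ∈ fixedSubalgebra k G (MvPolynomial (Fin n) k),
      p - r ∈ aug k G (MvPolynomial (Fin n) k))
    {p : MvPolynomial (Fin n) k} {e : ℕ} (hp : p.IsHomogeneous e) :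
    ∃ r ∈ fixedSubalgebra k G (MvPolynomial (Fin n) k), r.IsHomogeneous e ∧
      p - r ∈ aug k G (MvPolynomial (Fin n) k) := by
  obtain ⟨r, hr, hpr⟩ := R1 p
  refine ⟨homogeneousComponent e r, comp_mem_fixed hdeg hr e,
    homogeneousComponent_isHomogeneous e r, ?_⟩
  have hpe : homogeneousComponent e p = p := by
    rw [homogeneousComponent_of_mem ((mem_homogeneousSubmodule _ _).mpr hp), if_pos rfl]
  have h : p - homogeneousComponent e r = homogeneousComponent e (p - r) := by
    rw [map_sub, hpe]
  rw [h]
  exact comp_aug hdeg hpr e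

lemma bhrat : Rational k G (MvPolynomial (Fin n) k) := by
  intro p
  refine ⟨restrictTotalDegree (Fin n) k p.totalDegree,
    (mem_restrictTotalDegree _ _ _).mpr le_rfl, inferInstance, ?_⟩
  intro g q hq
  rw [mem_restrictTotalDegree] at hq ⊢
  conv_lhs => rw [← MvPolynomial.sum_homogeneousComponent q, Finset.smul_sum]
  refine le_trans (MvPolynomial.totalDegree_finset_sum _ _) ?_
  apply Finset.sup_le
  intro j hj
  refine le_trans ((hdeg g j _ (homogeneousComponent_isHomogeneous j q)).totalDegree_le) ?_
  exact le_trans (Nat.lt_succ_iff.mp (Finset.mem_range.mp hj)) hq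

omit hdeg in
lemma comp_mul_homog (f t : MvPolynomial (Fin n) k) {e : ℕ} (ht : t.IsHomogeneous e) (d : ℕ) :
    homogeneousComponent d (f * t) =
      (if e ≤ d then homogeneousComponent (d - e) f else 0) * t := by
  conv_lhs => rw [← MvPolynomial.sum_homogeneousComponent f, Finset.sum_mul, map_sum]
  have hterm : ∀ c, homogeneousComponent d (homogeneousComponent c f * t) =
      if d = c + e then homogeneousComponent c f * t else 0 := fun c =>
    homogeneousComponent_of_mem
      ((mem_homogeneousSubmodule _ _).mpr ((homogeneousComponent_isHomogeneous c f).mul ht))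
  simp_rw [hterm]
  by_cases he : e ≤ d
  · rw [if_pos he]
    have h2 : ∀ c, (if d = c + e then homogeneousComponent c f * t else 0) =
        if c = d - e then homogeneousComponent c f * t else 0 := by
      intro c
      congr 1
      simp only [eq_iff_iff]
      omega
    simp_rw [h2]
    rw [Finset.sum_ite_eq']
    split_ifs with h
    · rfl
    · rw [MvPolynomial.homogeneousComponent_eq_zero, zero_mul]
      simp only [Finset.mem_range, Nat.lt_succ_iff, not_le] at h
      exact h
  · rw [if_neg he, zero_mul]
    apply Finset.sum_eq_zero
    intro c _
    rw [if_neg]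
    omega

theorem polyFG (hLR : LinRed k G) :
    (fixedSubalgebra k G (MvPolynomial (Fin n) k)).FG := by
  classical
  obtain ⟨R1, R2⟩ := reynolds hLR (bhrat hdeg)
  set S : Set (MvPolynomial (Fin n) k) :=
    {p | p ∈ fixedSubalgebra k G (MvPolynomial (Fin n) k) ∧ ∃ d, 0 < d ∧ p.IsHomogeneous d}
    with hS
  have hIfg : (Ideal.span S).FG := IsNoetherian.noetherian _
  obtain ⟨T, hTS, hTspan⟩ := exists_finset_span S hIfg
  set E : MvPolynomial (Fin n) k → ℕ :=
    fun t => if h : ∃ d, 0 < d ∧ t.IsHomogeneous d then h.choose else 0 with hE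
  have hEpos : ∀ t ∈ S, 0 < E t ∧ t.IsHomogeneous (E t) := by
    intro t ht
    obtain ⟨-, hd⟩ := ht
    rw [hE]
    simp only [dif_pos hd]
    exact ⟨hd.choose_spec.1, hd.choose_spec.2⟩
  have key : ∀ d : ℕ, ∀ p, p ∈ fixedSubalgebra k G (MvPolynomial (Fin n) k) →
      p.IsHomogeneous d → p ∈ Algebra.adjoin k (T : Set (MvPolynomial (Fin n) k)) := by
    intro d
    induction d using Nat.strong_induction_on with
    | _ d ih =>
      intro p hp hh
      rcases Nat.eq_zero_or_pos d with hd0 | hdpos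
      · subst hd0
        have hc : p = MvPolynomial.C (MvPolynomial.coeff 0 p) := by
          rw [← MvPolynomial.homogeneousComponent_zero]
          rw [homogeneousComponent_of_mem ((mem_homogeneousSubmodule _ _).mpr hh), if_pos rfl]
        rw [hc, ← MvPolynomial.algebraMap_eq]
        exact Subalgebra.algebraMap_mem _ _
      · have hpT : p ∈ Submodule.span (MvPolynomial (Fin n) k)
            (T : Set (MvPolynomial (Fin n) k)) := by
          rw [hTspan]
          exact Submodule.subset_span ⟨hp, d, hdpos, hh⟩
        obtain ⟨f, -, hf⟩ := Submodule.mem_span_finset.mp hpT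
        set q : MvPolynomial (Fin n) k → MvPolynomial (Fin n) k :=
          fun t => if E t ≤ d then homogeneousComponent (d - E t) (f t) else 0 with hq
        have hpq : p = ∑ t ∈ T, q t * t := by
          have h1 : homogeneousComponent d p = p := by
            rw [homogeneousComponent_of_mem ((mem_homogeneousSubmodule _ _).mpr hh), if_pos rfl]
          conv_lhs => rw [← h1, ← hf]
          rw [map_sum]
          apply Finset.sum_congr rfl
          intro t ht
          rw [smul_eq_mul, comp_mul_homog (f t) t (hEpos t (hTS ht)).2 d]
        have hex : ∀ t : MvPolynomial (Fin n) k,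
            ∃ rr : MvPolynomial (Fin n) k,
              rr ∈ fixedSubalgebra k G (MvPolynomial (Fin n) k) ∧
              rr.IsHomogeneous (d - E t) ∧ q t - rr ∈ aug k G (MvPolynomial (Fin n) k) := by
          intro t
          by_cases hEt : E t ≤ d
          · have hqh : (q t).IsHomogeneous (d - E t) := by
              rw [hq]; simp only [if_pos hEt]
              exact homogeneousComponent_isHomogeneous _ _
            obtain ⟨r, h1, h2, h3⟩ := homogR1 hdeg R1 hqh
            exact ⟨r, h1, h2, h3⟩
          · refine ⟨0, Subalgebra.zero_mem _, isHomogeneous_zero _ _ _, ?_⟩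
            rw [hq]; simp only [if_neg hEt, sub_zero]
            exact zero_mem _
        choose r hrfix hrhom hraug using hex
        have hsub : p - ∑ t ∈ T, r t * t ∈ aug k G (MvPolynomial (Fin n) k) := by
          have h2 : p - ∑ t ∈ T, r t * t = ∑ t ∈ T, (q t - r t) * t := by
            rw [hpq, ← Finset.sum_sub_distrib]
            apply Finset.sum_congr rfl
            intro t _
            rw [sub_mul]
          rw [h2]
          apply Submodule.sum_mem
          intro t ht
          rw [mul_comm]
          exact fixed_mul_aug (hTS ht).1 (hraug t)
        have hfixsub : p - ∑ t ∈ T, r t * t ∈ fixedSubalgebra k G (MvPolynomial (Fin n) k) :=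
          sub_mem hp (Subalgebra.sum_mem _ fun t ht => mul_mem (hrfix t) (hTS ht).1)
        have hzero : p - ∑ t ∈ T, r t * t = 0 := R2 _ hsub fun g => hfixsub g
        have hpeq : p = ∑ t ∈ T, r t * t := by
          have := sub_eq_zero.mp hzero; exact this
        rw [hpeq]
        apply Subalgebra.sum_mem
        intro t ht
        exact mul_mem
          (ih (d - E t) (Nat.sub_lt hdpos (hEpos t (hTS ht)).1) (r t) (hrfix t) (hrhom t))
          (Algebra.subset_adjoin ht)
  refine ⟨T, le_antisymm ?_ ?_⟩
  · apply Algebra.adjoin_le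
    intro t ht
    exact (hTS ht).1
  · intro p hp
    have h1 : p = ∑ i ∈ Finset.range (p.totalDegree + 1), homogeneousComponent i p :=
      (MvPolynomial.sum_homogeneousComponent p).symm
    rw [h1]
    apply Subalgebra.sum_mem
    intro i _
    exact key i _ (comp_mem_fixed hdeg hp i) (homogeneousComponent_isHomogeneous i p)

end Poly

/-- Let `G` be a linearly reductive group (every finite-dimensional
linear representation is completely reducible) acting rationally on a finitely generated
`k`-algebra `A`.  Then the invariant ring `A^G` is a finitely generated `k`-algebra. -/
theorem stmt_7 (k : Type) [Field k] (G : Type) [Group G]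
    (A : Type) [CommRing A] [Algebra k A] [MulSemiringAction G A] [SMulCommClass G k A]
    (hLR : ∀ (V : Type) [AddCommGroup V] [Module k V] [DistribMulAction G V]
      [SMulCommClass G k V], FiniteDimensional k V →
      ∀ W : Submodule k V, (∀ g : G, ∀ w ∈ W, g • w ∈ W) →
        ∃ W' : Submodule k V, (∀ g : G, ∀ w ∈ W', g • w ∈ W') ∧ IsCompl W W')
    (hfg : Algebra.FiniteType k A)
    (hrat : ∀ a : A, ∃ W : Submodule k A, a ∈ W ∧ FiniteDimensional k W ∧
      ∀ g : G, ∀ w ∈ W, g • w ∈ W) :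
    (fixedSubalgebra k G A).FG := by
  classical
  have hLR' : LinRed k G := hLR
  have hrat' : Rational k G A := hrat
  obtain ⟨s, hs⟩ := hfg.out
  choose Wf hmem hfd hstab using hrat'
  set W : Submodule k A := s.sup Wf with hWdef
  haveI : ∀ a : A, FiniteDimensional k (Wf a) := hfd
  haveI hWfd : FiniteDimensional k W := Submodule.finiteDimensional_finset_sup _ _
  have hWstab : ∀ g : G, ∀ w ∈ W, g • w ∈ W := finset_sup_stable _ _ (fun a => hstab a)
  have hsW : (s : Set A) ⊆ W := by
    intro x hx
    exact (Finset.le_sup (f := Wf) hx) (hmem x)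
  have hWgen : Algebra.adjoin k (W : Set A) = ⊤ := by
    apply top_unique
    rw [← hs]
    exact Algebra.adjoin_mono hsW
  set n : ℕ := Module.finrank k W with hn
  set b : Module.Basis (Fin n) k W := Module.finBasis k W with hb
  set L : G → W →ₗ[k] W := fun g =>
    { toFun := fun w => ⟨g • (w : A), hWstab g _ w.2⟩
      map_add' := fun x y => Subtype.ext (by simp [smul_add])
      map_smul' := fun c x => Subtype.ext (by simp [smul_comm g c]) } with hL
  have hLcoe : ∀ (g : G) (w : W), ((L g w : W) : A) = g • (w : A) := fun _ _ => rfl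
  set lin : W →ₗ[k] MvPolynomial (Fin n) k :=
    Module.Basis.constr b k (fun i => MvPolynomial.X i) with hlin
  have hlinb : ∀ i, lin (b i) = MvPolynomial.X i := fun i => b.constr_basis k _ i
  set π : MvPolynomial (Fin n) k →ₐ[k] A :=
    MvPolynomial.aeval (fun i => ((b i : W) : A)) with hπdef
  have hπX : ∀ i, π (MvPolynomial.X i) = ((b i : W) : A) := fun i => MvPolynomial.aeval_X _ i
  have hπlin : ∀ w : W, π (lin w) = (w : A) := by
    intro w
    have h : (π.toLinearMap.comp lin) = W.subtype := by
      apply b.ext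
      intro i
      simp only [LinearMap.comp_apply, AlgHom.toLinearMap_apply, hlinb, hπX,
        Submodule.subtype_apply]
    exact LinearMap.congr_fun h w
  set φ : G → (MvPolynomial (Fin n) k →ₐ[k] MvPolynomial (Fin n) k) :=
    fun g => MvPolynomial.aeval (fun i => lin (L g (b i))) with hφdef
  have hφX : ∀ g i, φ g (MvPolynomial.X i) = lin (L g (b i)) := fun g i =>
    MvPolynomial.aeval_X _ i
  have hφlin : ∀ g w, φ g (lin w) = lin (L g w) := by
    intro g w
    have h : ((φ g).toLinearMap.comp lin) = lin.comp (L g) := by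
      apply b.ext
      intro i
      simp only [LinearMap.comp_apply, AlgHom.toLinearMap_apply, hlinb, hφX]
    exact LinearMap.congr_fun h w
  have hφone : ∀ p, φ 1 p = p := by
    intro p
    have h : φ 1 = AlgHom.id k _ := by
      apply MvPolynomial.algHom_ext
      intro i
      rw [hφX]
      have h2 : L 1 (b i) = b i := Subtype.ext (one_smul G ((b i : W) : A))
      rw [h2, hlinb, AlgHom.id_apply]
    rw [h, AlgHom.id_apply]
  have hφmul : ∀ g h p, φ (g * h) p = φ g (φ h p) := by
    intro g h p
    have he : φ (g * h) = (φ g).comp (φ h) := by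
      apply MvPolynomial.algHom_ext
      intro i
      rw [hφX, AlgHom.comp_apply, hφX, hφlin]
      congr 1
      exact Subtype.ext (mul_smul g h ((b i : W) : A))
    rw [he, AlgHom.comp_apply]
  letI : SMul G (MvPolynomial (Fin n) k) := ⟨fun g p => φ g p⟩
  have hsmul : ∀ g (p : MvPolynomial (Fin n) k), g • p = φ g p := fun _ _ => rfl
  letI : MulAction G (MvPolynomial (Fin n) k) :=
    { one_smul := hφone, mul_smul := hφmul }
  letI : DistribMulAction G (MvPolynomial (Fin n) k) :=
    { smul_zero := fun g => map_zero (φ g), smul_add := fun g x y => map_add (φ g) x y }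
  letI : MulSemiringAction G (MvPolynomial (Fin n) k) :=
    { smul_one := fun g => map_one (φ g), smul_mul := fun g x y => map_mul (φ g) x y }
  letI : SMulCommClass G k (MvPolynomial (Fin n) k) :=
    ⟨fun g c p => map_smul (φ g) c p⟩
  have hdeg : ∀ (g : G) (d : ℕ) (p : MvPolynomial (Fin n) k),
      p.IsHomogeneous d → (g • p).IsHomogeneous d := by
    intro g d p hp
    rw [hsmul]
    have h1 : ∀ i, (lin (L g (b i))).IsHomogeneous 1 := by
      intro i
      rw [hlin, Module.Basis.constr_apply, Finsupp.sum]
      apply MvPolynomial.IsHomogeneous.sum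
      intro j _
      exact Submodule.smul_mem (MvPolynomial.homogeneousSubmodule (Fin n) k 1) _
        (MvPolynomial.isHomogeneous_X k j)
    have h2 := hp.aeval (fun i => lin (L g (b i))) h1
    simpa [hφdef] using h2
  have hπequi : ∀ (g : G) (p : MvPolynomial (Fin n) k), π (g • p) = g • (π p) := by
    intro g p
    rw [hsmul]
    have he : π.comp (φ g) = (MulSemiringAction.toAlgHom k A g).comp π := by
      apply MvPolynomial.algHom_ext
      intro i
      rw [AlgHom.comp_apply, AlgHom.comp_apply, hφX, hπlin, hπX]
      rw [MulSemiringAction.toAlgHom_apply, hLcoe]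
    exact AlgHom.congr_fun he p
  have hπsurj : Function.Surjective π := by
    have hr : Algebra.adjoin k (Set.range fun i => ((b i : W) : A)) ≤ π.range := by
      apply Algebra.adjoin_le
      rintro _ ⟨i, rfl⟩
      exact ⟨MvPolynomial.X i, hπX i⟩
    have hWle : (W : Set A) ⊆
        ↑(Algebra.adjoin k (Set.range fun i => ((b i : W) : A))) := by
      intro w hw
      have hspan : w ∈ Submodule.span k (Set.range fun i => ((b i : W) : A)) := by
        have h1 : (⟨w, hw⟩ : W) ∈ Submodule.span k (Set.range b) := by
          rw [b.span_eq]; trivial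
        have h2 := Submodule.mem_map_of_mem (f := W.subtype) h1
        rw [Submodule.map_span] at h2
        have h3 : W.subtype '' Set.range b = Set.range fun i => ((b i : W) : A) := by
          rw [← Set.range_comp]; rfl
        rwa [h3] at h2
      have h4 : Submodule.span k (Set.range fun i => ((b i : W) : A)) ≤
          Subalgebra.toSubmodule (Algebra.adjoin k (Set.range fun i => ((b i : W) : A))) :=
        Submodule.span_le.mpr Algebra.subset_adjoin
      exact h4 hspan
    have htop : π.range = ⊤ := by
      apply top_unique
      calc (⊤ : Subalgebra k A) = Algebra.adjoin k (W : Set A) := hWgen.symm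
        _ ≤ Algebra.adjoin k (Set.range fun i => ((b i : W) : A)) := Algebra.adjoin_le hWle
        _ ≤ π.range := hr
    intro a
    have : a ∈ π.range := by rw [htop]; trivial
    exact this
  obtain ⟨RA1, RA2⟩ := reynolds hLR' (show Rational k G A from hrat)
  obtain ⟨RB1, RB2⟩ := reynolds hLR' (bhrat hdeg)
  have hmap : fixedSubalgebra k G A =
      (fixedSubalgebra k G (MvPolynomial (Fin n) k)).map π := by
    apply le_antisymm
    · intro a ha
      obtain ⟨p, hpa⟩ := hπsurj a
      obtain ⟨r, hrfix, hpr⟩ := RB1 p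
      have hπaug : ∀ x ∈ aug k G (MvPolynomial (Fin n) k), π x ∈ aug k G A := by
        intro x hx
        induction hx using Submodule.span_induction with
        | mem y hy =>
            obtain ⟨g, q, rfl⟩ := hy
            rw [map_sub, hπequi]
            exact mem_aug_of g (π q)
        | zero => rw [map_zero]; exact zero_mem _
        | add x y _ _ hx hy => rw [map_add]; exact add_mem hx hy
        | smul c x _ hx => rw [map_smul]; exact Submodule.smul_mem _ c hx
      have hπrfix : π r ∈ fixedSubalgebra k G A := by
        intro g; rw [← hπequi, hrfix g]
      have h1 : a - π r ∈ aug k G A := by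
        rw [← hpa, ← map_sub]
        exact hπaug _ hpr
      have h2 : a - π r = 0 := by
        apply RA2 _ h1
        intro g
        rw [smul_sub, ha g, hπrfix g]
      exact ⟨r, hrfix, (sub_eq_zero.mp h2).symm⟩
    · rintro _ ⟨p, hpfix, rfl⟩
      intro g
      show g • π p = π p
      rw [← hπequi, hpfix g]
  rw [hmap]
  exact Subalgebra.FG.map _ (polyFG hdeg hLR')


end Stmt7
end

section
/- Hilbert–Mumford criterion for G_m-actions: for a linear action of G_m on P(V) and a point x = [v] ∈ P(V), the point x is semistable if and only if 0 lies in the convex hull of the weight set wt(v) ⊆ ℤ, and x is stable if and only if 0 lies in the interior of the convex hull of wt(v). -/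
open MvPolynomial

set_option linter.unusedSectionVars false

section HMAux

variable {k : Type} [Field k] [IsAlgClosed k] {ι : Type} [Fintype ι]

lemma limit_lemma (wt : ι → ℤ) (v : ι → k) (ε : ℤ) (hε : ε = 1 ∨ ε = -1)
    (hge : ∀ m, v m ≠ 0 → 0 ≤ ε * wt m)
    (p : MvPolynomial ι k)
    (hp : ∀ t : kˣ, eval (fun i => ((t ^ wt i : kˣ) : k) * v i) p = 0) :
    eval (fun m => if wt m = 0 then v m else 0) p = 0 := by
  classical
  set f : ι → Polynomial k := fun m => Polynomial.C (v m) * Polynomial.X ^ (ε * wt m).toNat with hf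
  have heval : ∀ (x : k) (q : MvPolynomial ι k), Polynomial.eval x ((aeval f) q) =
      eval (fun m => v m * x ^ (ε * wt m).toNat) q := by
    intro x q
    induction q using MvPolynomial.induction_on with
    | C a => simp [hf]
    | add q r hq hr => simp [hq, hr]
    | mul_X q n ih =>
        simp only [map_mul, aeval_X, eval_mul, eval_X, ih, Polynomial.eval_mul, hf,
          Polynomial.eval_pow, Polynomial.eval_C, Polynomial.eval_X]
        rw [← hf, ih]
  have hzero : (aeval f) p = 0 := by
    apply Polynomial.eq_zero_of_infinite_isRoot
    have hsub : ({(0:k)}ᶜ : Set k) ⊆ {x | ((aeval f) p).IsRoot x} := by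
      intro x hx
      have hx0 : x ≠ 0 := hx
      set t : kˣ := Units.mk0 x hx0 with ht
      have key : (fun m => v m * x ^ (ε * wt m).toNat)
          = fun i => (((t ^ ε) ^ wt i : kˣ) : k) * v i := by
        funext m
        by_cases hm : v m = 0
        · simp [hm]
        · have h1 : ((t ^ ε) ^ wt m : kˣ) = t ^ ((ε * wt m).toNat : ℤ) := by
            rw [← zpow_mul, Int.toNat_of_nonneg (hge m hm)]
          rw [h1, zpow_natCast, mul_comm]
          norm_cast
      simp only [Set.mem_setOf_eq, Polynomial.IsRoot, heval x, key]
      exact hp (t ^ ε)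
    exact ((Set.finite_singleton (0:k)).infinite_compl).mono hsub
  have h0 := (heval 0 p).symm
  rw [hzero] at h0
  simp only [Polynomial.eval_zero] at h0
  have hfun : (fun m => v m * (0:k) ^ (ε * wt m).toNat)
      = fun m => if wt m = 0 then v m else 0 := by
    funext m
    by_cases hm : v m = 0
    · simp [hm]
    · by_cases hwm : wt m = 0
      · simp [hwm]
      · have hne : (ε * wt m).toNat ≠ 0 := by
          have := hge m hm
          rcases hε with h | h <;> subst h <;> omega
        simp [hwm, zero_pow hne]
  rwa [hfun] at h0


variable {k : Type} [Field k] [IsAlgClosed k] {ι : Type} [Fintype ι]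

lemma binom (wt : ι → ℤ) (v : ι → k) (m n : ι) (e1 f1 e2 f2 : ℕ)
    (h : wt m * e1 + wt n * f1 = wt m * e2 + wt n * f2) (t : kˣ) :
    eval (fun i => ((t ^ wt i : kˣ) : k) * v i)
      (X m ^ e1 * X n ^ f1 * C (v m ^ e2 * v n ^ f2)
        - X m ^ e2 * X n ^ f2 * C (v m ^ e1 * v n ^ f1)) = 0 := by
  have key : ((t ^ wt m : kˣ) : k) ^ e1 * ((t ^ wt n : kˣ) : k) ^ f1
      = ((t ^ wt m : kˣ) : k) ^ e2 * ((t ^ wt n : kˣ) : k) ^ f2 := by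
    have h2 : (t ^ wt m) ^ (e1 : ℤ) * (t ^ wt n) ^ (f1 : ℤ)
        = (t ^ wt m) ^ (e2 : ℤ) * (t ^ wt n) ^ (f2 : ℤ) := by
      rw [← zpow_mul, ← zpow_mul, ← zpow_mul, ← zpow_mul, ← zpow_add, ← zpow_add, h]
    have := congrArg (Units.val) h2
    simpa [zpow_natCast] using this
  simp only [eval_sub, eval_mul, eval_pow, eval_X, eval_C]
  rw [mul_pow, mul_pow, mul_pow, mul_pow]
  linear_combination (v m ^ e1 * v m ^ e2 * v n ^ f1 * v n ^ f2) * key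

lemma closed_orbit (wt : ι → ℤ) (v : ι → k) (i j : ι) (hvi : v i ≠ 0) (hvj : v j ≠ 0)
    (ha : wt i < 0) (hb : 0 < wt j) (w : ι → k)
    (hw : ∀ p : MvPolynomial ι k,
      (∀ t : kˣ, eval (fun i => ((t ^ wt i : kˣ) : k) * v i) p = 0) → eval w p = 0) :
    ∃ t : kˣ, w = fun m => ((t ^ wt m : kˣ) : k) * v m := by
  classical
  -- Step 0 : coordinates outside the support vanish
  have hz : ∀ n, v n = 0 → w n = 0 := by
    intro n hn
    have := hw (X n) (fun t => by simp [hn])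
    simpa using this
  -- Step 1 : binomial relations at the level of k
  have K : ∀ m n : ι, ∀ e1 f1 e2 f2 : ℕ,
      wt m * e1 + wt n * f1 = wt m * e2 + wt n * f2 →
      w m ^ e1 * w n ^ f1 * (v m ^ e2 * v n ^ f2)
        = w m ^ e2 * w n ^ f2 * (v m ^ e1 * v n ^ f1) := by
    intro m n e1 f1 e2 f2 h
    have := hw _ (binom wt v m n e1 f1 e2 f2 h)
    simp only [eval_sub, eval_mul, eval_pow, eval_X, eval_C] at this
    exact sub_eq_zero.mp this
  -- Step 2 : coordinates in the support do not vanish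
  have hwne : ∀ m, v m ≠ 0 → w m ≠ 0 := by
    intro m hm
    rcases le_or_gt 0 (wt m) with hc | hc
    · have h := K m i ((-wt i).toNat) ((wt m).toNat) 0 0 (by
        rw [Int.toNat_of_nonneg (by omega : (0:ℤ) ≤ -wt i), Int.toNat_of_nonneg hc]
        push_cast; ring)
      simp only [pow_zero, mul_one, one_mul] at h
      intro h0
      have he : ((-wt i).toNat) ≠ 0 := by omega
      rw [h0, zero_pow he, zero_mul] at h
      exact (mul_ne_zero (pow_ne_zero _ hm) (pow_ne_zero _ hvi)) h.symm
    · have h := K m j ((wt j).toNat) ((-wt m).toNat) 0 0 (by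
        rw [Int.toNat_of_nonneg (by omega : (0:ℤ) ≤ -wt m), Int.toNat_of_nonneg hb.le]
        push_cast; ring)
      simp only [pow_zero, mul_one, one_mul] at h
      intro h0
      have he : ((wt j).toNat) ≠ 0 := by omega
      rw [h0, zero_pow he, zero_mul] at h
      exact (mul_ne_zero (pow_ne_zero _ hm) (pow_ne_zero _ hvj)) h.symm

  -- Step 3 : unit-valued ratios
  set R : ι → kˣ := fun m =>
    if h : v m = 0 then 1 else Units.mk0 (w m / v m) (div_ne_zero (hwne m h) h) with hR
  have hRval : ∀ m (hm : v m ≠ 0), ((R m : kˣ) : k) = w m / v m := by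
    intro m hm
    simp [hR, hm]
  -- Step 4 : zpow relations among the ratios
  have L2 : ∀ m n : ι, v m ≠ 0 → v n ≠ 0 → ∀ c d : ℤ, wt m * c + wt n * d = 0 →
      R m ^ c * R n ^ d = 1 := by
    intro m n hm hn c d hcd
    have hwm := hwne m hm
    have hwn := hwne n hn
    have h1 := Int.toNat_sub_toNat_neg c
    have h2 := Int.toNat_sub_toNat_neg d
    have E := K m n c.toNat d.toNat (-c).toNat (-d).toNat (by linear_combination hcd + wt m * h1 + wt n * h2)
    rw [Units.ext_iff]
    push_cast [Units.val_mul, Units.val_zpow_eq_zpow_val, hRval m hm, hRval n hn]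
    have hdm : w m / v m ≠ 0 := div_ne_zero hwm hm
    have hdn : w n / v n ≠ 0 := div_ne_zero hwn hn
    rw [show c = (c.toNat : ℤ) - ((-c).toNat : ℤ) from h1.symm,
        show d = (d.toNat : ℤ) - ((-d).toNat : ℤ) from h2.symm,
        zpow_sub₀ hdm, zpow_sub₀ hdn, zpow_natCast, zpow_natCast, zpow_natCast, zpow_natCast,
        div_pow, div_pow, div_pow, div_pow]
    field_simp
    linear_combination (v m : k) ^ ((-c).toNat) * 0 + E

  -- Step 5 : the gcd of the weights on the support
  set T : Finset ℤ := (Finset.univ.filter (fun m => v m ≠ 0)).image wt with hT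
  obtain ⟨g, hgspan⟩ : ∃ g : ℤ, Ideal.span (T : Set ℤ) = Ideal.span {g} :=
    (IsPrincipalIdealRing.principal (Ideal.span (T : Set ℤ))).principal
  have hmemT : ∀ m, v m ≠ 0 → wt m ∈ T :=
    fun m hm => Finset.mem_image.mpr ⟨m, Finset.mem_filter.mpr ⟨Finset.mem_univ m, hm⟩, rfl⟩
  have hgdvd : ∀ m, v m ≠ 0 → g ∣ wt m := by
    intro m hm
    have h1 : wt m ∈ Ideal.span (T : Set ℤ) := Ideal.subset_span (by exact_mod_cast hmemT m hm)
    rw [hgspan] at h1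
    exact Ideal.mem_span_singleton.mp h1
  have hg0 : g ≠ 0 := by
    intro h
    have h2 := hgdvd j hvj
    rw [h, zero_dvd_iff] at h2
    omega
  have hgmem : g ∈ Ideal.span (T : Set ℤ) := by
    rw [hgspan]; exact Ideal.subset_span rfl
  obtain ⟨f, hf⟩ : ∃ f : ℤ → ℤ, ∑ a ∈ T, f a • a = g := by
    obtain ⟨f, -, hf⟩ := Submodule.mem_span_finset.mp hgmem
    exact ⟨f, hf⟩
  -- a choice of a support element of each weight
  have hsig : ∀ a ∈ T, ∃ m : ι, v m ≠ 0 ∧ wt m = a := by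
    intro a haT
    obtain ⟨m, hm, hma⟩ := Finset.mem_image.mp haT
    exact ⟨m, (Finset.mem_filter.mp hm).2, hma⟩
  set σ : ℤ → ι := fun a => if h : ∃ m : ι, v m ≠ 0 ∧ wt m = a then h.choose else j with hσ
  have hσ1 : ∀ a ∈ T, v (σ a) ≠ 0 ∧ wt (σ a) = a := by
    intro a haT
    have h := hsig a haT
    simp only [hσ, dif_pos h]
    exact h.choose_spec
  -- Step 6 : the candidate
  set s : kˣ := ∏ a ∈ T, R (σ a) ^ (f a) with hs
  have hsum1 : ∑ a ∈ T, (a / g) * f a = 1 := by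
    have h1 : ∀ a ∈ T, g * ((a / g) * f a) = f a • a := by
      intro a haT
      obtain ⟨m, hm, rfl⟩ := hsig a haT
      rw [← mul_assoc, Int.mul_ediv_cancel' (hgdvd m hm), smul_eq_mul]
      ring
    have h2 : g * ∑ a ∈ T, (a / g) * f a = g * 1 := by
      rw [Finset.mul_sum, Finset.sum_congr rfl h1, hf, mul_one]
    exact mul_left_cancel₀ hg0 h2
  have hsn : ∀ n, v n ≠ 0 → s ^ (wt n / g) = R n := by
    intro n hn
    have en : g * (wt n / g) = wt n := Int.mul_ediv_cancel' (hgdvd n hn)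
    have step1 : s ^ (wt n / g) = ∏ a ∈ T, (R (σ a) ^ f a) ^ (wt n / g) := by
      rw [hs]
      exact map_prod (zpowGroupHom (wt n / g)) _ T
    have step2 : ∀ a ∈ T, (R (σ a) ^ f a) ^ (wt n / g) = R n ^ ((a / g) * f a) := by
      intro a haT
      obtain ⟨hva, hwa⟩ := hσ1 a haT
      have ea : g * (a / g) = a := by
        obtain ⟨m, hm, rfl⟩ := hsig a haT
        exact Int.mul_ediv_cancel' (hgdvd m hm)
      have hrel := L2 (σ a) n hva hn (wt n / g) (-(a / g)) (by
        rw [hwa]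
        linear_combination (a / g) * en - (wt n / g) * ea)
      rw [zpow_neg, mul_inv_eq_one] at hrel
      rw [← zpow_mul, mul_comm (f a) (wt n / g), zpow_mul, hrel, ← zpow_mul]
    have step3 : (∏ a ∈ T, R n ^ ((a / g) * f a)) = R n ^ (∑ a ∈ T, (a / g) * f a) := by
      classical
      induction T using Finset.induction_on with
      | empty => simp
      | insert _ _ hnot ih => rw [Finset.prod_insert hnot, Finset.sum_insert hnot, ih, zpow_add]
    rw [step1, Finset.prod_congr rfl step2, step3, hsum1, zpow_one]
  -- Step 7 : extract a root
  obtain ⟨x, hx⟩ := IsAlgClosed.exists_pow_nat_eq (s : k) (n := g.natAbs) (by omega)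
  have hx0 : x ≠ 0 := by
    intro h
    rw [h, zero_pow (by omega : g.natAbs ≠ 0)] at hx
    exact s.ne_zero hx.symm
  set t0 : kˣ := Units.mk0 x hx0 with ht0def
  have ht0 : t0 ^ (g.natAbs : ℤ) = s := by
    rw [zpow_natCast, Units.ext_iff, Units.val_pow_eq_pow_val]
    exact hx
  have ht : ∃ t : kˣ, t ^ g = s := by
    rcases le_or_gt 0 g with hg | hg
    · exact ⟨t0, by rw [show g = (g.natAbs : ℤ) from (Int.natAbs_of_nonneg hg).symm]; exact ht0⟩
    · refine ⟨t0⁻¹, ?_⟩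
      rw [inv_zpow', show -g = (g.natAbs : ℤ) by omega]
      exact ht0
  obtain ⟨t, htg⟩ := ht
  refine ⟨t, funext fun m => ?_⟩
  by_cases hm : v m = 0
  · simp [hz m hm, hm]
  · have hR : t ^ wt m = R m := by
      rw [show wt m = g * (wt m / g) from (Int.mul_ediv_cancel' (hgdvd m hm)).symm,
        zpow_mul, htg, hsn m hm]
    rw [hR, hRval m hm, div_mul_cancel₀ _ hm]


end HMAux

/-- **Hilbert–Mumford for `𝔾ₘ`-actions.** Consider a linear action of
`𝔾ₘ` on `ℙ(V)` over an algebraically closed field `k`, diagonalised so that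
`V = ι → k` and `t` acts on the `i`-th coordinate by `t^{wt i}`.  Let `x = [v]` for
`v ≠ 0`.  Then:
* `x` is semistable — i.e. `0` does not lie in the Zariski closure of the orbit
  `𝔾ₘ·v` (closure membership being expressed via vanishing of polynomials) — iff
  `0` lies in the convex hull of the weight set `wt(v) = {wt i : v i ≠ 0}`;
* `x` is stable — i.e. the stabiliser of `v` is finite and the orbit `𝔾ₘ·v` is Zariski
  closed in `V` — iff `0` lies in the interior of the convex hull of `wt(v)`. -/
theorem stmt_9 (k : Type) [Field k] [IsAlgClosed k]
    (ι : Type) [Fintype ι] (wt : ι → ℤ) (v : ι → k) (hv : v ≠ 0) :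
    ((¬ ∀ p : MvPolynomial ι k,
        (∀ t : kˣ, eval (fun i => ((t ^ wt i : kˣ) : k) * v i) p = 0) →
          eval (0 : ι → k) p = 0) ↔
      (0 : ℝ) ∈ convexHull ℝ ((fun i => (wt i : ℝ)) '' {i | v i ≠ 0})) ∧
    (((({t : kˣ | (fun i => ((t ^ wt i : kˣ) : k) * v i) = v}).Finite ∧
        ∀ w : ι → k,
          (∀ p : MvPolynomial ι k,
            (∀ t : kˣ, eval (fun i => ((t ^ wt i : kˣ) : k) * v i) p = 0) →
              eval w p = 0) →
          ∃ t : kˣ, w = fun i => ((t ^ wt i : kˣ) : k) * v i)) ↔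
      (0 : ℝ) ∈ interior (convexHull ℝ ((fun i => (wt i : ℝ)) '' {i | v i ≠ 0}))) := by
  classical
  set A : Set ℝ := (fun i => (wt i : ℝ)) '' {i | v i ≠ 0} with hA
  -- description of membership of `0` in the hull and its interior
  have hullmem : (0 : ℝ) ∈ convexHull ℝ A ↔
      (∃ m, v m ≠ 0 ∧ wt m ≤ 0) ∧ (∃ m, v m ≠ 0 ∧ 0 ≤ wt m) := by
    constructor
    · intro h
      constructor
      · by_contra hc
        push_neg at hc
        have hsub : A ⊆ Set.Ioi 0 := by
          rintro x ⟨m, hm, rfl⟩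
          have := hc m hm
          simp only [Set.mem_Ioi]
          exact_mod_cast this
        have := convexHull_min hsub (convex_Ioi 0) h
        simp at this
      · by_contra hc
        push_neg at hc
        have hsub : A ⊆ Set.Iio 0 := by
          rintro x ⟨m, hm, rfl⟩
          have := hc m hm
          simp only [Set.mem_Iio]
          exact_mod_cast this
        have := convexHull_min hsub (convex_Iio 0) h
        simp at this
    · rintro ⟨⟨m, hm, hm0⟩, ⟨n, hn, hn0⟩⟩
      have hxA : ((wt m : ℝ)) ∈ A := ⟨m, hm, rfl⟩
      have hyA : ((wt n : ℝ)) ∈ A := ⟨n, hn, rfl⟩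
      have hseg : segment ℝ ((wt m : ℝ)) ((wt n : ℝ)) ⊆ convexHull ℝ A :=
        (convex_convexHull ℝ A).segment_subset (subset_convexHull ℝ A hxA)
          (subset_convexHull ℝ A hyA)
      have h1 : ((wt m : ℝ)) ≤ 0 := by exact_mod_cast hm0
      have h2 : (0:ℝ) ≤ ((wt n : ℝ)) := by exact_mod_cast hn0
      rw [segment_eq_Icc (h1.trans h2)] at hseg
      exact hseg ⟨h1, h2⟩
  have intmem : (0 : ℝ) ∈ interior (convexHull ℝ A) ↔
      (∃ m, v m ≠ 0 ∧ wt m < 0) ∧ (∃ m, v m ≠ 0 ∧ 0 < wt m) := by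
    constructor
    · intro h
      rw [mem_interior_iff_mem_nhds, Metric.mem_nhds_iff] at h
      obtain ⟨ε, hε, hball⟩ := h
      have hp : (ε/2 : ℝ) ∈ convexHull ℝ A := hball (by
        simp only [Metric.mem_ball, Real.dist_eq]
        rw [abs_of_pos (by linarith)]; linarith)
      have hn : (-(ε/2) : ℝ) ∈ convexHull ℝ A := hball (by
        simp only [Metric.mem_ball, Real.dist_eq]
        rw [abs_of_neg (by linarith)]; linarith)
      constructor
      · by_contra hc
        push_neg at hc
        have hsub : A ⊆ Set.Ici 0 := by
          rintro x ⟨m, hm, rfl⟩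
          have := hc m hm
          simp only [Set.mem_Ici]
          exact_mod_cast this
        have := convexHull_min hsub (convex_Ici 0) hn
        simp only [Set.mem_Ici] at this
        linarith
      · by_contra hc
        push_neg at hc
        have hsub : A ⊆ Set.Iic 0 := by
          rintro x ⟨m, hm, rfl⟩
          have := hc m hm
          simp only [Set.mem_Iic]
          exact_mod_cast this
        have := convexHull_min hsub (convex_Iic 0) hp
        simp only [Set.mem_Iic] at this
        linarith
    · rintro ⟨⟨m, hm, hm0⟩, ⟨n, hn, hn0⟩⟩
      have hxA : ((wt m : ℝ)) ∈ A := ⟨m, hm, rfl⟩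
      have hyA : ((wt n : ℝ)) ∈ A := ⟨n, hn, rfl⟩
      have hseg : segment ℝ ((wt m : ℝ)) ((wt n : ℝ)) ⊆ convexHull ℝ A :=
        (convex_convexHull ℝ A).segment_subset (subset_convexHull ℝ A hxA)
          (subset_convexHull ℝ A hyA)
      have h1 : ((wt m : ℝ)) < 0 := by exact_mod_cast hm0
      have h2 : (0:ℝ) < ((wt n : ℝ)) := by exact_mod_cast hn0
      rw [segment_eq_Icc (h1.le.trans h2.le)] at hseg
      have := interior_mono hseg
      rw [interior_Icc] at this
      exact this ⟨h1, h2⟩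
  constructor
  · -- Part 1 : semistability
    constructor
    · intro hns
      rw [hullmem]
      by_contra hc
      rw [not_and_or] at hc
      have hkey : ∃ ε : ℤ, (ε = 1 ∨ ε = -1) ∧ ∀ m, v m ≠ 0 → 0 < ε * wt m := by
        rcases hc with hc | hc
        · push_neg at hc
          exact ⟨1, Or.inl rfl, fun m hm => by have := hc m hm; omega⟩
        · push_neg at hc
          exact ⟨-1, Or.inr rfl, fun m hm => by have := hc m hm; omega⟩
      obtain ⟨ε, hε, hpos⟩ := hkey
      apply hns
      intro p hp
      have h0 := limit_lemma wt v ε hε (fun m hm => (hpos m hm).le) p hp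
      have hfun : (fun m => if wt m = 0 then v m else 0) = (0 : ι → k) := by
        funext m
        by_cases hwm : wt m = 0
        · simp only [hwm, if_pos]
          by_contra hvm
          have hplt := hpos m (by simpa using hvm)
          rw [hwm, mul_zero] at hplt
          exact absurd hplt (lt_irrefl 0)
        · simp [hwm]
      rwa [hfun] at h0
    · intro h0 hall
      rw [hullmem] at h0
      obtain ⟨⟨m, hm, hm0⟩, ⟨n, hn, hn0⟩⟩ := h0
      by_cases hzm : wt m = 0
      · have hvan := hall _ (fun t => binom wt v m m 1 0 0 0
          (by rw [hzm]; ring) t)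
        simp at hvan
        exact hm hvan
      · by_cases hzn : wt n = 0
        · have hvan := hall _ (fun t => binom wt v n n 1 0 0 0
            (by rw [hzn]; ring) t)
          simp at hvan
          exact hn hvan
        · have hmneg : wt m < 0 := lt_of_le_of_ne hm0 hzm
          have hnpos : 0 < wt n := lt_of_le_of_ne (by omega) (Ne.symm hzn)
          have hvan := hall _ (fun t => binom wt v m n ((wt n).toNat) ((-wt m).toNat) 0 0
            (by
              rw [Int.toNat_of_nonneg hnpos.le, Int.toNat_of_nonneg (by omega : (0:ℤ) ≤ -wt m)]
              push_cast; ring) t)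
          simp only [eval_sub, eval_mul, eval_pow, eval_X, eval_C, Pi.zero_apply] at hvan
          rw [zero_pow (by omega : (wt n).toNat ≠ 0), zero_mul, zero_mul] at hvan
          have hvan2 : v m ^ (wt n).toNat * v n ^ (-wt m).toNat = 0 := by
            linear_combination -hvan
          exact (mul_ne_zero (pow_ne_zero _ hm) (pow_ne_zero _ hn)) hvan2
  · -- Part 2 : stability
    constructor
    · rintro ⟨hfin, hclosed⟩
      rw [intmem]
      by_contra hc
      rw [not_and_or] at hc
      have hkey : ∃ ε : ℤ, (ε = 1 ∨ ε = -1) ∧ ∀ m, v m ≠ 0 → 0 ≤ ε * wt m := by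
        rcases hc with hc | hc
        · push_neg at hc
          exact ⟨1, Or.inl rfl, fun m hm => by have := hc m hm; omega⟩
        · push_neg at hc
          exact ⟨-1, Or.inr rfl, fun m hm => by have := hc m hm; omega⟩
      obtain ⟨ε, hε, hge⟩ := hkey
      by_cases hallzero : ∀ m, v m ≠ 0 → wt m = 0
      · -- the stabiliser is all of kˣ, contradicting finiteness
        have huniv : {t : kˣ | (fun i => ((t ^ wt i : kˣ) : k) * v i) = v} = Set.univ := by
          ext t
          simp only [Set.mem_setOf_eq, Set.mem_univ, iff_true]
          funext m
          by_cases hm : v m = 0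
          · simp [hm]
          · rw [hallzero m hm, zpow_zero]
            simp
        rw [huniv] at hfin
        have hinf : Infinite kˣ := by
          have h1 : ({(0:k)}ᶜ : Set k).Infinite :=
            Set.Finite.infinite_compl (Set.finite_singleton 0)
          have h2 := h1.to_subtype
          exact Infinite.of_injective (fun x : ({(0:k)}ᶜ : Set k) => Units.mk0 x.1 x.2)
            (fun a b h => Subtype.ext ((Units.mk0_inj _ _).mp h))
        exact Set.infinite_univ hfin
      · -- the limit point is in the closure but not in the orbit
        push_neg at hallzero
        obtain ⟨m₀, hm₀, hwm₀⟩ := hallzero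
        set w : ι → k := fun m => if wt m = 0 then v m else 0 with hw
        obtain ⟨t, ht⟩ := hclosed w (fun p hp => limit_lemma wt v ε hε hge p hp)
        have := congrFun ht m₀
        rw [hw] at this
        simp only [if_neg hwm₀] at this
        exact (mul_ne_zero (Units.ne_zero _) hm₀) this.symm
    · intro h0
      rw [intmem] at h0
      obtain ⟨⟨i, hvi, hai⟩, ⟨j, hvj, hbj⟩⟩ := h0
      constructor
      · -- finiteness of the stabiliser
        have hsub : {t : kˣ | (fun i => ((t ^ wt i : kˣ) : k) * v i) = v} ⊆
            (fun t : kˣ => (t : k)) ⁻¹' {x : k | (Polynomial.X ^ (wt j).toNat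
              - Polynomial.C 1 : Polynomial k).IsRoot x} := by
          intro t ht
          have hj := congrFun ht j
          have h1 : ((t ^ wt j : kˣ) : k) = 1 :=
            mul_right_cancel₀ hvj (by rw [one_mul]; exact hj)
          have h2 : ((t : k)) ^ ((wt j).toNat) = 1 := by
            have : (t ^ wt j : kˣ) = t ^ ((wt j).toNat : ℤ) := by
              rw [Int.toNat_of_nonneg hbj.le]
            rw [this, zpow_natCast] at h1
            rw [← Units.val_pow_eq_pow_val]
            exact h1
          simp only [Set.mem_preimage, Set.mem_setOf_eq, Polynomial.IsRoot,
            Polynomial.eval_sub, Polynomial.eval_pow, Polynomial.eval_X, Polynomial.eval_C]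
          rw [h2]; ring
        have hroots : ({x : k | (Polynomial.X ^ (wt j).toNat
            - Polynomial.C 1 : Polynomial k).IsRoot x}).Finite :=
          Polynomial.finite_setOf_isRoot (Polynomial.X_pow_sub_C_ne_zero (by omega) 1)
        exact Set.Finite.subset (hroots.preimage (fun a _ b _ h => Units.ext h)) hsub
      · intro w hw
        exact closed_orbit wt v i j hvi hvj hai hbj w hw
end

section
/- Slice theorem for G_a-actions: if D is a locally nilpotent derivation of a finitely generated k-algebra A (char k = 0) admitting a slice s ∈ A with D(s) = 1, then ker(D) is a finitely generated k-algebra, A = ker(D)[s] is a polynomial ring over ker(D) in the variable s, and ker(D) ≅ A/(s). -/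
set_option linter.unusedSectionVars false
namespace Stmt13

def kerD (k A : Type) [CommRing k] [CommRing A] [Algebra k A]
    (D : Derivation k A A) : Subalgebra k A where
  carrier := {a | D a = 0}
  mul_mem' := by intro a b ha hb; rw [Set.mem_setOf_eq, Derivation.leibniz, ha, hb]; simp
  add_mem' := by intro a b ha hb; rw [Set.mem_setOf_eq, map_add, ha, hb, add_zero]
  algebraMap_mem' := fun c => D.map_algebraMap c

variable {k A : Type} [Field k] [CharZero k] [CommRing A] [Algebra k A]
variable (D : Derivation k A A) (s : A)

lemma D_coe (c : kerD k A D) : D (c : A) = 0 := c.2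

lemma D_aeval (hs : D s = 1) (q : Polynomial (kerD k A D)) :
    D (Polynomial.aeval s q) = Polynomial.aeval s (Polynomial.derivative q) := by
  induction q using Polynomial.induction_on' with
  | add p q hp hq => simp [hp, hq]
  | monomial n c =>
    rw [Polynomial.aeval_monomial, Polynomial.derivative_monomial, Polynomial.aeval_monomial,
      Derivation.leibniz, Derivation.leibniz_pow, hs]
    have : D ((algebraMap (↥(kerD k A D)) A) c) = 0 := c.2
    rw [this, smul_zero, add_zero, map_mul, smul_eq_mul, smul_eq_mul, nsmul_eq_mul, map_natCast]
    ring

end Stmt13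
namespace Stmt13
variable {k A : Type} [Field k] [CharZero k] [CommRing A] [Algebra k A]
variable (D : Derivation k A A) (s : A)

lemma cancel_nat (n : ℕ) (c : kerD k A D) (h : c * (((n+1 : ℕ)) : kerD k A D) = 0) :
    c = 0 := by
  have hcast : (((n+1 : ℕ)) : kerD k A D) = algebraMap k (kerD k A D) ((n+1 : ℕ) : k) := by
    simp
  have h2 : ((n+1 : ℕ) : k) • c = 0 := by
    rw [hcast, mul_comm, ← Algebra.smul_def] at h
    exact h
  have hne : ((n+1 : ℕ) : k) ≠ 0 := Nat.cast_ne_zero.mpr (Nat.succ_ne_zero n)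
  calc c = ((n+1:ℕ):k)⁻¹ • (((n+1:ℕ):k) • c) := (inv_smul_smul₀ hne c).symm
    _ = 0 := by rw [h2, smul_zero]

end Stmt13
namespace Stmt13
variable {k A : Type} [Field k] [CharZero k] [CommRing A] [Algebra k A]
variable (D : Derivation k A A) (s : A)

lemma C_eq_zero (c : kerD k A D) (h : Polynomial.aeval s (Polynomial.C c) = 0) : c = 0 := by
  rw [Polynomial.aeval_C] at h
  exact Subtype.coe_injective h

lemma aeval_injAux (hs : D s = 1) : ∀ n (p : Polynomial (kerD k A D)),
    p.natDegree ≤ n → Polynomial.aeval s p = 0 → p = 0 := by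
  intro n
  induction n with
  | zero =>
    intro p hdeg h0
    rw [Polynomial.eq_C_of_natDegree_le_zero hdeg] at h0 ⊢
    rw [C_eq_zero D s _ h0, map_zero]
  | succ n ih =>
    intro p hdeg h0
    have hd : Polynomial.aeval s (Polynomial.derivative p) = 0 := by
      rw [← D_aeval D s hs, h0, map_zero]
    have hdz : Polynomial.derivative p = 0 := by
      refine ih _ ?_ hd
      have := Polynomial.natDegree_derivative_le p
      omega
    have hC : p = Polynomial.C (p.coeff 0) := by
      ext i
      cases i with
      | zero => simp
      | succ i =>
        have hci : p.coeff (i+1) * (((i+1 : ℕ)) : kerD k A D) = 0 := by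
          have h1 := Polynomial.coeff_derivative p i
          rw [hdz, Polynomial.coeff_zero] at h1
          rw [Nat.cast_add, Nat.cast_one]
          exact h1.symm
        rw [cancel_nat D i _ hci]
        simp
    rw [hC] at h0 ⊢
    rw [C_eq_zero D s _ h0, map_zero]

end Stmt13
namespace Stmt13
variable {k A : Type} [Field k] [CharZero k] [CommRing A] [Algebra k A]
variable (D : Derivation k A A) (s : A)

lemma deriv_integral (p : Polynomial (kerD k A D)) :
    Polynomial.derivative (p.sum fun i c =>
      Polynomial.C ((((i+1 : ℕ)) : k)⁻¹ • c) * Polynomial.X ^ (i+1)) = p := by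
  rw [Polynomial.sum, map_sum]
  conv_rhs => rw [← Polynomial.sum_C_mul_X_pow_eq p, Polynomial.sum]
  refine Finset.sum_congr rfl fun i _ => ?_
  rw [Polynomial.derivative_C_mul_X_pow]
  congr 2
  · have hcast : (((i+1 : ℕ)) : kerD k A D) = algebraMap k (kerD k A D) ((i+1 : ℕ) : k) := by
      simp
    rw [hcast, mul_comm, ← Algebra.smul_def, smul_smul,
      mul_inv_cancel₀ (Nat.cast_ne_zero.mpr (Nat.succ_ne_zero i) : ((i+1:ℕ):k) ≠ 0), one_smul]

lemma aeval_surjAux (hs : D s = 1) : ∀ n (a : A), (⇑D)^[n] a = 0 →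
    a ∈ Set.range (Polynomial.aeval (R := ↥(kerD k A D)) s) := by
  intro n
  induction n with
  | zero => intro a ha; exact ⟨0, by simpa using ha.symm⟩
  | succ n ih =>
    intro a ha
    obtain ⟨p, hp⟩ := ih (D a) (by rw [← Function.iterate_succ_apply]; exact ha)
    set q : Polynomial (kerD k A D) := p.sum fun i c =>
      Polynomial.C ((((i+1 : ℕ)) : k)⁻¹ • c) * Polynomial.X ^ (i+1) with hq
    have hmem : a - Polynomial.aeval s q ∈ kerD k A D := by
      show D (a - Polynomial.aeval s q) = 0
      rw [map_sub, D_aeval D s hs, hq, deriv_integral, hp, sub_self]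
    refine ⟨Polynomial.C ⟨a - Polynomial.aeval s q, hmem⟩ + q, ?_⟩
    rw [map_add, Polynomial.aeval_C]
    show (a - Polynomial.aeval s q) + _ = a
    ring

end Stmt13
namespace Stmt13

/-- **slice theorem for `𝔾ₐ`-actions.** Let `D` be a locally nilpotent
derivation of a finitely generated commutative `k`-algebra `A` (char `k = 0`) admitting
a slice `s` with `D s = 1`.  Then `ker D` is a finitely generated `k`-algebra,
`A = (ker D)[s]` is a polynomial ring over `ker D` in the variable `s` (i.e. evaluation
at `s` is an isomorphism `(ker D)[X] ≃ A`), and `ker D ≅ A/(s)` (the composite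
`ker D ↪ A ↠ A/(s)` is bijective). -/
theorem stmt_13 (k A : Type) [Field k] [CharZero k] [CommRing A] [Algebra k A]
    (hfg : Algebra.FiniteType k A) (D : Derivation k A A)
    (hLND : ∀ a : A, ∃ n : ℕ, (⇑D)^[n] a = 0) (s : A) (hs : D s = 1) :
    (kerD k A D).FG ∧
    Function.Bijective (Polynomial.aeval (R := ↥(kerD k A D)) s) ∧
    Function.Bijective
      ((Ideal.Quotient.mk (Ideal.span {s})).comp
        ((kerD k A D).val : ↥(kerD k A D) →ₐ[k] A).toRingHom) := by
  have hbij : Function.Bijective (Polynomial.aeval (R := ↥(kerD k A D)) s) := by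
    constructor
    · intro p q hpq
      have h0 : Polynomial.aeval s (p - q) = 0 := by rw [map_sub, hpq, sub_self]
      exact sub_eq_zero.mp (aeval_injAux D s hs (p-q).natDegree (p-q) le_rfl h0)
    · intro a
      obtain ⟨n, hn⟩ := hLND a
      exact aeval_surjAux D s hs n a hn
  have hbij2 : Function.Bijective
      ((Ideal.Quotient.mk (Ideal.span {s})).comp
        ((kerD k A D).val : ↥(kerD k A D) →ₐ[k] A).toRingHom) := by
    constructor
    · intro c d hcd
      have hmem : (c : A) - d ∈ Ideal.span {s} := Ideal.Quotient.eq.mp hcd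
      obtain ⟨a, ha⟩ := Ideal.mem_span_singleton.mp hmem
      obtain ⟨p, hp⟩ := hbij.2 a
      have h0 : Polynomial.aeval s (Polynomial.C (c - d) - Polynomial.X * p) = 0 := by
        rw [map_sub, Polynomial.aeval_C, map_mul, Polynomial.aeval_X, hp]
        rw [map_sub]
        show ((c : A) - d) - s * a = 0
        rw [ha, sub_self]
      have heq := sub_eq_zero.mp
        (aeval_injAux D s hs _ _ le_rfl h0)
      have hc0 := congrArg (fun q => Polynomial.coeff q 0) heq
      simp only [Polynomial.coeff_C, Polynomial.mul_coeff_zero, Polynomial.coeff_X_zero,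
        zero_mul, if_pos rfl] at hc0
      exact sub_eq_zero.mp hc0
    · intro x
      obtain ⟨a, rfl⟩ := Ideal.Quotient.mk_surjective x
      obtain ⟨p, rfl⟩ := hbij.2 a
      refine ⟨p.coeff 0, ?_⟩
      show Ideal.Quotient.mk _ ((p.coeff 0 : A)) = Ideal.Quotient.mk _ (Polynomial.aeval s p)
      rw [Ideal.Quotient.eq]
      have hcoe : (algebraMap (↥(kerD k A D)) A) (p.coeff 0) = ((p.coeff 0 : A)) := rfl
      have hrep : Polynomial.aeval s p = ((p.coeff 0 : A)) + s * Polynomial.aeval s p.divX := by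
        conv_lhs => rw [← Polynomial.divX_mul_X_add p]
        rw [map_add, map_mul, Polynomial.aeval_X, Polynomial.aeval_C, hcoe]
        ring
      rw [show ((p.coeff 0 : A)) - Polynomial.aeval s p = -(s * Polynomial.aeval s p.divX) by
        rw [hrep]; ring]
      exact neg_mem (Ideal.mem_span_singleton.mpr ⟨_, rfl⟩)
  refine ⟨?_, hbij, hbij2⟩
  rw [Subalgebra.fg_iff_finiteType]
  have hq : Algebra.FiniteType k (A ⧸ Ideal.span {s}) :=
    Algebra.FiniteType.of_surjective (Ideal.Quotient.mkₐ k (Ideal.span {s}))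
      (Ideal.Quotient.mkₐ_surjective k _)
  let f : ↥(kerD k A D) →ₐ[k] A ⧸ Ideal.span {s} :=
    (Ideal.Quotient.mkₐ k (Ideal.span {s})).comp (kerD k A D).val
  have hf : Function.Bijective f := hbij2
  exact Algebra.FiniteType.equiv hq (AlgEquiv.ofBijective f hf).symm
end Stmt13
end

section
/- Key proposition for graded G_a-actions: let X be an affine scheme with an action of G_a corresponding to a locally nilpotent derivation D on O(X). Then D admits a slice (an element s with D(s)=1) if and only if the G_a-action extends to an action of a semidirect product G_a ⋊_n G_m for some n > 0 such that lim_{t→0} t·x exists for every point x ∈ X and every point z in the limit set Z = {lim_{t→0} t·x} has trivial G_a-stabilizer. -/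
open DirectSum Function

namespace Stmt16

variable {k A : Type} [Field k] [CharZero k] [CommRing A] [Algebra k A]

theorem iter_nsmul (D : Derivation k A A) (j : ℕ) (m : ℕ) (x : A) :
    (⇑D)^[j] (m • x) = m • (⇑D)^[j] x := by
  induction j generalizing x with
  | zero => rfl
  | succ j ih =>
    rw [Function.iterate_succ_apply, Function.iterate_succ_apply, map_nsmul, ih]

theorem iter_zero (D : Derivation k A A) (j : ℕ) : (⇑D)^[j] (0 : A) = 0 :=
  Function.iterate_fixed (map_zero D) j

theorem der_mul_pow (D : Derivation k A A) {s : A} (hs : D s = 1) {c : A} (hc : D c = 0)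
    (m : ℕ) : D (c * s ^ (m + 1)) = (m + 1) • (c * s ^ m) := by
  rw [D.leibniz, hc, smul_zero, add_zero, D.leibniz_pow, hs]
  simp only [Nat.add_sub_cancel, smul_eq_mul, mul_one]
  exact mul_smul_comm _ _ _

theorem iter_mul_pow (D : Derivation k A A) {s : A} (hs : D s = 1) :
    ∀ (j m : ℕ) (c : A), D c = 0 → j ≤ m →
      (⇑D)^[j] (c * s ^ m) = m.descFactorial j • (c * s ^ (m - j)) := by
  intro j
  induction j with
  | zero => intro m c hc _; simp
  | succ j ih =>
    intro m c hc hj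
    cases m with
    | zero => omega
    | succ m =>
      rw [Function.iterate_succ_apply, der_mul_pow D hs hc m, iter_nsmul,
        ih m c hc (by omega), smul_smul, ← Nat.succ_descFactorial_succ, Nat.succ_sub_succ]

theorem iter_mul_pow_gt (D : Derivation k A A) {s : A} (hs : D s = 1) {j m : ℕ} (c : A)
    (hc : D c = 0) (h : m < j) : (⇑D)^[j] (c * s ^ m) = 0 := by
  obtain ⟨t, rfl⟩ : ∃ t, j = (t + 1) + m := ⟨j - m - 1, by omega⟩
  rw [Function.iterate_add_apply, iter_mul_pow D hs m m c hc le_rfl, Nat.sub_self, pow_zero,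
    mul_one, Function.iterate_succ_apply, map_nsmul, hc, smul_zero, iter_zero]

theorem forward_dir (D : Derivation k A A) (hLND : ∀ a : A, ∃ n : ℕ, (⇑D)^[n] a = 0)
    {s : A} (hs : D s = 1) :
    ∃ w : ℤ → Submodule k A,
      DirectSum.IsInternal w ∧
      (1 : A) ∈ w 0 ∧
      (∀ (i j : ℤ) (a b : A), a ∈ w i → b ∈ w j → a * b ∈ w (i + j)) ∧
      (∀ r : ℤ, 0 < r → w r = ⊥) ∧
      (∀ (r : ℤ), ∀ a ∈ w r, D a ∈ w (r + 1)) ∧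
      (∀ z : A →ₐ[k] k, (∀ r : ℤ, r < 0 → ∀ a ∈ w r, z a = 0) →
        ∃ a : A, z (D a) ≠ 0) := by
  classical
  set K : Submodule k A := LinearMap.ker (D : A →ₗ[k] A) with hK
  set w : ℤ → Submodule k A :=
    fun i => if 0 < i then ⊥ else K.map (LinearMap.mulRight k (s ^ (-i).toNat)) with hw
  have memw : ∀ (i : ℤ), i ≤ 0 → ∀ (a : A),
      (a ∈ w i ↔ ∃ c, D c = 0 ∧ c * s ^ (-i).toNat = a) := by
    intro i hi a
    simp [hw, if_neg (not_lt.mpr hi), Submodule.mem_map, LinearMap.mem_ker,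
      LinearMap.mulRight_apply, hK]
  have hbot : ∀ i : ℤ, 0 < i → w i = ⊥ := by
    intro i hi; simp [hw, if_pos hi]
  -- antiderivatives inside ⨆ w
  have hanti : ∀ b ∈ ⨆ i, w i, ∃ c ∈ ⨆ i, w i, D c = b := by
    intro b hb
    refine Submodule.iSup_induction w (motive := fun b => ∃ c ∈ ⨆ i, w i, D c = b) hb ?_
      ⟨0, zero_mem _, map_zero D⟩ ?_
    · intro i x hx
      rcases lt_or_ge 0 i with hi | hi
      · have hx0 : x = 0 := by rw [hbot i hi] at hx; simpa using hx
        exact ⟨0, zero_mem _, by rw [map_zero, hx0]⟩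
      · obtain ⟨c, hc, rfl⟩ := (memw i hi _).mp hx
        set m := (-i).toNat with hm
        have hcins : (((m : k) + 1)⁻¹ • c) * s ^ (m + 1) ∈ w (i - 1) := by
          rw [memw (i - 1) (by omega)]
          refine ⟨((m : k) + 1)⁻¹ • c, by rw [D.map_smul, hc, smul_zero], ?_⟩
          congr 2
          omega
        refine ⟨(((m : k) + 1)⁻¹ • c) * s ^ (m + 1), Submodule.mem_iSup_of_mem (i - 1) hcins, ?_⟩
        have hc' : D (((m : k) + 1)⁻¹ • c) = 0 := by rw [D.map_smul, hc, smul_zero]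
        rw [der_mul_pow D hs hc' m, smul_mul_assoc, ← Nat.cast_smul_eq_nsmul k, smul_smul]
        have hne : ((m : k) + 1) ≠ 0 := Nat.cast_add_one_ne_zero m
        have : ((m + 1 : ℕ) : k) * ((m : k) + 1)⁻¹ = 1 := by
          push_cast
          exact mul_inv_cancel₀ hne
        rw [this, one_smul]
    · rintro x y ⟨cx, hcx, hdx⟩ ⟨cy, hcy, hdy⟩
      exact ⟨cx + cy, add_mem hcx hcy, by rw [map_add, hdx, hdy]⟩
  have htop : ⨆ i, w i = ⊤ := by
    have hmain : ∀ (N : ℕ) (a : A), (⇑D)^[N] a = 0 → a ∈ ⨆ i, w i := by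
      intro N
      induction N with
      | zero =>
        intro a ha
        simp only [Function.iterate_zero_apply] at ha
        rw [ha]; exact zero_mem _
      | succ N ih =>
        intro a ha
        obtain ⟨c, hcmem, hDc⟩ := hanti (D a)
          (ih (D a) (by rw [← Function.iterate_succ_apply]; exact ha))
        have hsub : a - c ∈ w 0 := by
          rw [memw 0 le_rfl]
          exact ⟨a - c, by rw [map_sub, hDc, sub_self], by simp⟩
        have : a = (a - c) + c := by ring
        rw [this]
        exact add_mem (Submodule.mem_iSup_of_mem 0 hsub) hcmem
    rw [eq_top_iff]
    intro a _
    obtain ⟨N, hN⟩ := hLND a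
    exact hmain N a hN
  have hindep : iSupIndep w := by
    apply iSupIndep_of_dfinsupp_lsum_injective
    rw [injective_iff_map_eq_zero]
    intro f hf
    by_contra hne
    have hsupp : f.support.Nonempty := by
      rw [Finset.nonempty_iff_ne_empty]
      intro h
      apply hne
      ext i
      have : i ∉ f.support := by rw [h]; exact Finset.notMem_empty i
      simpa [DFinsupp.mem_support_iff] using this
    have hle0 : ∀ i ∈ f.support, i ≤ 0 := by
      intro i hi
      by_contra hpos
      have hwbot : w i = ⊥ := hbot i (by omega)
      have h2 : (f i : A) ∈ (⊥ : Submodule k A) := (le_of_eq hwbot) (f i).2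
      have : f i = 0 := Subtype.ext (by simpa using h2)
      exact DFinsupp.mem_support_iff.mp hi this
    set i₀ := f.support.min' hsupp with hi₀
    have hi₀mem : i₀ ∈ f.support := f.support.min'_mem hsupp
    set M := (-i₀).toNat with hM
    have hsum : ∑ i ∈ f.support, ((f i : A)) = 0 := by
      rw [DFinsupp.lsum_apply_apply, DFinsupp.sumAddHom_apply] at hf
      simpa [DFinsupp.sum] using hf
    set Dl := (D : A →ₗ[k] A) with hDl
    have h0 : ∑ i ∈ f.support, (Dl ^ M) ((f i : A)) = 0 := by
      rw [← map_sum, hsum, map_zero]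
    have hDliter : ∀ x : A, (Dl ^ M) x = (⇑D)^[M] x := by
      intro x
      rw [Module.End.pow_apply]
      rfl
    have hterm : ∀ i ∈ f.support, i ≠ i₀ → (Dl ^ M) ((f i : A)) = 0 := by
      intro i hi hnei
      obtain ⟨c, hc, hca⟩ := (memw i (hle0 i hi) _).mp (f i).2
      have hlt : (-i).toNat < M := by
        have h1 : i₀ ≤ i := Finset.min'_le _ _ hi
        have h2 : i ≤ 0 := hle0 i hi
        omega
      rw [hDliter, ← hca, iter_mul_pow_gt D hs c hc hlt]
    rw [Finset.sum_eq_single_of_mem i₀ hi₀mem hterm] at h0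
    obtain ⟨c, hc, hca⟩ := (memw i₀ (hle0 i₀ hi₀mem) _).mp (f i₀).2
    rw [hDliter, ← hca, iter_mul_pow D hs M M c hc le_rfl, Nat.descFactorial_self,
      Nat.sub_self, pow_zero, mul_one] at h0
    have hc0 : c = 0 := by
      have h2 : (((Nat.factorial M) : ℕ) : k) • c = 0 := by rw [Nat.cast_smul_eq_nsmul]; exact h0
      have h3 := congrArg (fun x => ((((Nat.factorial M) : ℕ) : k))⁻¹ • x) h2
      simpa [smul_smul,
        inv_mul_cancel₀ (show (((Nat.factorial M) : ℕ) : k) ≠ 0 from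
          Nat.cast_ne_zero.mpr M.factorial_ne_zero)] using h3
    have : f i₀ = 0 := Subtype.ext (by rw [← hca, hc0, zero_mul]; simp)
    exact DFinsupp.mem_support_iff.mp hi₀mem this
  refine ⟨w, ?_, ?_, ?_, hbot, ?_, ?_⟩
  · exact (DirectSum.isInternal_submodule_iff_iSupIndep_and_iSup_eq_top w).mpr ⟨hindep, htop⟩
  · rw [memw 0 le_rfl]
    exact ⟨1, D.map_one_eq_zero, by simp⟩
  · intro i j a b ha hb
    rcases lt_or_ge 0 i with hi | hi
    · have : a = 0 := by rw [hbot i hi] at ha; simpa using ha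
      rw [this, zero_mul]; exact zero_mem _
    rcases lt_or_ge 0 j with hj | hj
    · have : b = 0 := by rw [hbot j hj] at hb; simpa using hb
      rw [this, mul_zero]; exact zero_mem _
    obtain ⟨c, hc, rfl⟩ := (memw i hi _).mp ha
    obtain ⟨d, hd, rfl⟩ := (memw j hj _).mp hb
    rw [memw (i + j) (by omega)]
    refine ⟨c * d, ?_, ?_⟩
    · rw [D.leibniz, hc, hd, smul_zero, smul_zero, add_zero]
    · have hexp : (-(i + j)).toNat = (-i).toNat + (-j).toNat := by omega
      rw [hexp, pow_add]; ring
  · intro r a ha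
    rcases lt_or_ge 0 r with hr | hr
    · have : a = 0 := by rw [hbot r hr] at ha; simpa using ha
      rw [this, map_zero]; exact zero_mem _
    obtain ⟨c, hc, rfl⟩ := (memw r hr _).mp ha
    rcases Nat.eq_zero_or_pos (-r).toNat with hm | hm
    · have heq : D (c * s ^ (-r).toNat) = 0 := by rw [hm, pow_zero, mul_one, hc]
      rw [heq]; exact zero_mem _
    · obtain ⟨m, hmeq⟩ : ∃ m, (-r).toNat = m + 1 := ⟨(-r).toNat - 1, by omega⟩
      rw [hmeq, der_mul_pow D hs hc m]
      rw [memw (r + 1) (by omega)]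
      refine ⟨(m + 1 : ℕ) • c, by rw [map_nsmul, hc, smul_zero], ?_⟩
      have hexp : (-(r + 1)).toNat = m := by omega
      rw [hexp, smul_mul_assoc]
  · intro z _
    refine ⟨s, ?_⟩
    rw [hs, map_one]
    exact one_ne_zero

theorem backward_dir [IsAlgClosed k] (hfg : Algebra.FiniteType k A) (D : Derivation k A A)
    (n : ℤ) (hn : 0 < n) (w : ℤ → Submodule k A) (hint : DirectSum.IsInternal w)
    (h1 : (1 : A) ∈ w 0)
    (hmul : ∀ (i j : ℤ) (a b : A), a ∈ w i → b ∈ w j → a * b ∈ w (i + j))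
    (hpos : ∀ r : ℤ, 0 < r → w r = ⊥)
    (hD : ∀ (r : ℤ), ∀ a ∈ w r, D a ∈ w (r + n))
    (hz : ∀ z : A →ₐ[k] k, (∀ r : ℤ, r < 0 → ∀ a ∈ w r, z a = 0) →
      ∃ a : A, z (D a) ≠ 0) :
    ∃ s : A, D s = 1 := by
  classical
  set S : Set A := (⋃ r ∈ {r : ℤ | r < 0}, (w r : Set A)) ∪ (⇑D '' (w (-n))) with hS
  -- the span of S is everything
  have htop : Ideal.span S = ⊤ := by
    by_contra hT
    obtain ⟨mI, hmI, hle⟩ := Ideal.exists_le_maximal _ hT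
    letI : Field (A ⧸ mI) := Ideal.Quotient.field mI
    haveI : Algebra.FiniteType k (A ⧸ mI) :=
      @Algebra.FiniteType.of_surjective _ _ _ _ _ _ _ _ hfg (Ideal.Quotient.mkₐ k mI)
        (Ideal.Quotient.mkₐ_surjective k mI)
    haveI : Module.Finite k (A ⧸ mI) := finite_of_finite_type_of_isJacobsonRing k (A ⧸ mI)
    have hbij : Function.Bijective (algebraMap k (A ⧸ mI)) :=
      ⟨(algebraMap k (A ⧸ mI)).injective,
        IsAlgClosed.algebraMap_bijective_of_isIntegral.2⟩
    let e : k ≃ₐ[k] (A ⧸ mI) := AlgEquiv.ofBijective (Algebra.ofId k (A ⧸ mI)) hbij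
    let z : A →ₐ[k] k := (e.symm.toAlgHom).comp (Ideal.Quotient.mkₐ k mI)
    have hzm : ∀ x ∈ mI, z x = 0 := by
      intro x hx
      have hx0 : Ideal.Quotient.mk mI x = 0 := Ideal.Quotient.eq_zero_iff_mem.mpr hx
      show e.symm (Ideal.Quotient.mkₐ k mI x) = 0
      rw [Ideal.Quotient.mkₐ_eq_mk, hx0, map_zero]
    have hzS : ∀ x ∈ S, z x = 0 := fun x hx => hzm x (hle (Ideal.subset_span hx))
    obtain ⟨a, ha⟩ := hz z (by
      intro r hr a ha
      exact hzS a (Or.inl (Set.mem_biUnion hr ha)))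
    apply ha
    have hmem : a ∈ ⨆ i, w i := by rw [hint.submodule_iSup_eq_top]; trivial
    refine Submodule.iSup_induction w (motive := fun x => z (D x) = 0) hmem ?_ (by simp) ?_
    · intro r x hx
      have hDx := hD r x hx
      rcases lt_trichotomy (r + n) 0 with h | h | h
      · exact hzS _ (Or.inl (Set.mem_biUnion h hDx))
      · have hr : r = -n := by omega
        subst hr
        exact hzS _ (Or.inr ⟨x, hx, rfl⟩)
      · have hx0 : D x ∈ (⊥ : Submodule k A) := (le_of_eq (hpos _ h)) hDx
        have : D x = 0 := by simpa using hx0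
        rw [this, map_zero]
    · intro x y hx hy
      rw [map_add, map_add, hx, hy, add_zero]
  -- decomposition machinery
  set dec := (LinearEquiv.ofBijective (DirectSum.coeLinearMap w) hint).symm with hdec
  set P0 : A →+ A := AddMonoidHom.mk' (fun x => ((dec x 0 : w 0) : A)) (by
    intro x y
    show ((dec (x + y) 0 : w 0) : A) = ((dec x 0 : w 0) : A) + ((dec y 0 : w 0) : A)
    rw [map_add]
    rfl) with hP0
  have hdec_of : ∀ (r : ℤ) (x : A) (hx : x ∈ w r),
      dec x = DirectSum.of (fun i => ↥(w i)) r ⟨x, hx⟩ := by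
    intro r x hx
    rw [hdec, LinearEquiv.symm_apply_eq]
    erw [LinearEquiv.ofBijective_apply,
      DirectSum.coeLinearMap_of]
  have hP0_mem : ∀ (r : ℤ) (x : A), x ∈ w r → P0 x = if r = 0 then x else 0 := by
    intro r x hx
    show ((dec x 0 : w 0) : A) = _
    rw [hdec_of r x hx]
    rw [DirectSum.coe_of_apply]
    split <;> simp
  have hP0_in : ∀ x : A, P0 x ∈ w 0 := fun x => (dec x 0).2
  have hsum_dec : ∀ x : A, ∑ i ∈ (dec x).support, ((dec x i : A)) = x := by
    intro x
    have h := (LinearEquiv.ofBijective (DirectSum.coeLinearMap w) hint).apply_symm_apply x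
    erw [LinearEquiv.ofBijective_apply, DirectSum.coeLinearMap_eq_dfinsuppSum] at h
    rw [← hdec] at h
    simpa [DFinsupp.sum] using h
  have hkey : ∀ (x g : A) (r : ℤ), g ∈ w r → P0 (x * g) = ((dec x (-r) : w (-r)) : A) * g := by
    intro x g r hg
    conv_lhs => rw [← hsum_dec x]
    rw [Finset.sum_mul, map_sum]
    have hco : ∀ i ∈ (dec x).support,
        P0 (((dec x i : w i) : A) * g) = if i = -r then ((dec x i : w i) : A) * g else 0 := by
      intro i _
      have hm : ((dec x i : w i) : A) * g ∈ w (i + r) := hmul i r _ _ (dec x i).2 hg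
      by_cases h : i = -r
      · subst h
        rw [if_pos rfl]
        rw [show (-r) + r = 0 by ring] at hm
        rw [hP0_mem 0 _ hm, if_pos rfl]
      · rw [if_neg h, hP0_mem (i + r) _ hm, if_neg (by omega)]
    rw [Finset.sum_congr rfl hco, Finset.sum_ite_eq' (dec x).support (-r)
      (fun i => ((dec x i : w i) : A) * g)]
    by_cases h : -r ∈ (dec x).support
    · rw [if_pos h]
    · rw [if_neg h]
      have h0 : dec x (-r) = 0 := DFinsupp.notMem_support_iff.mp h
      rw [h0]
      simp
  -- produce the slice
  have h1span : (1 : A) ∈ Ideal.span S := htop ▸ Submodule.mem_top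
  obtain ⟨c, hcsupp, hcsum⟩ := Submodule.mem_span_set.mp h1span
  have hterm : ∀ g ∈ c.support, ∃ t : A, P0 (c g * g) = D t := by
    intro g hg
    rcases hcsupp hg with hneg | himg
    · obtain ⟨r, hr, hgr⟩ := Set.mem_iUnion₂.mp hneg
      have hrneg : r < 0 := hr
      refine ⟨0, ?_⟩
      rw [map_zero, hkey (c g) g r hgr]
      have h0 : ((dec (c g) (-r) : w (-r)) : A) ∈ (⊥ : Submodule k A) :=
        (le_of_eq (hpos (-r) (by omega))) (dec (c g) (-r)).2
      have h0' : ((dec (c g) (-r) : w (-r)) : A) = 0 := by simpa using h0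
      rw [h0', zero_mul]
    · obtain ⟨b, hb, rfl⟩ := himg
      have hg0 : D b ∈ w 0 := by
        have h2 := hD (-n) b hb
        rwa [neg_add_cancel] at h2
      refine ⟨P0 (c (D b)) * b, ?_⟩
      rw [hkey (c (D b)) (D b) 0 hg0, neg_zero]
      have hD0 : D (P0 (c (D b))) = 0 := by
        have h2 := hD 0 _ (hP0_in (c (D b)))
        have h3 : D (P0 (c (D b))) ∈ (⊥ : Submodule k A) :=
          (le_of_eq (hpos (0 + n) (by omega))) h2
        simpa using h3
      rw [D.leibniz, hD0, smul_zero, add_zero, smul_eq_mul]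
      rfl
  choose! t ht using hterm
  refine ⟨∑ g ∈ c.support, t g, ?_⟩
  have hDsum : D (∑ g ∈ c.support, t g) = ∑ g ∈ c.support, P0 (c g * g) := by
    rw [map_sum]
    exact Finset.sum_congr rfl fun g hg => (ht g hg).symm
  have hs1 : ∑ g ∈ c.support, c g * g = 1 := by
    have := hcsum
    simpa [Finsupp.sum, smul_eq_mul] using this
  rw [hDsum, ← map_sum, hs1]
  rw [hP0_mem 0 1 h1, if_pos rfl]

end Stmt16

/-- **key proposition for graded `𝔾ₐ`-actions.** Let `X = Spec A` be an
affine scheme of finite type over an algebraically closed field `k` of characteristic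
zero, with a `𝔾ₐ`-action corresponding to a locally nilpotent derivation `D` of `A`.
Then `D` admits a slice (`∃ s, D s = 1`) if and only if the `𝔾ₐ`-action extends to
`𝔾ₐ ⋊_n 𝔾ₘ` for some `n > 0` — i.e. there is a `ℤ`-grading of `A` as a `k`-algebra for
which `D` is homogeneous of degree `n` — such that:
(a) `lim_{t→0} t·x` exists for every `x ∈ X`, i.e. the grading is supported in
    non-positive degrees; and
(b) every point `z` of the limit set `Z` — i.e. every `k`-point `z : A → k` killing all
    components of negative degree — has trivial `𝔾ₐ`-stabiliser, i.e. `z (D a) ≠ 0` for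
    some `a`. -/
theorem stmt_16 (k A : Type) [Field k] [CharZero k] [IsAlgClosed k]
    [CommRing A] [Algebra k A] (hfg : Algebra.FiniteType k A)
    (D : Derivation k A A) (hLND : ∀ a : A, ∃ n : ℕ, (⇑D)^[n] a = 0) :
    (∃ s : A, D s = 1) ↔
    ∃ n : ℤ, 0 < n ∧ ∃ w : ℤ → Submodule k A,
      DirectSum.IsInternal w ∧
      (1 : A) ∈ w 0 ∧
      (∀ (i j : ℤ) (a b : A), a ∈ w i → b ∈ w j → a * b ∈ w (i + j)) ∧
      (∀ r : ℤ, 0 < r → w r = ⊥) ∧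
      (∀ (r : ℤ), ∀ a ∈ w r, D a ∈ w (r + n)) ∧
      (∀ z : A →ₐ[k] k, (∀ r : ℤ, r < 0 → ∀ a ∈ w r, z a = 0) →
        ∃ a : A, z (D a) ≠ 0) := by
  constructor
  · rintro ⟨s, hs⟩
    obtain ⟨w, hi, h1, hm, hp, hd, hzc⟩ := Stmt16.forward_dir D hLND hs
    exact ⟨1, one_pos, w, hi, h1, hm, hp, hd, hzc⟩
  · rintro ⟨n, hn, w, hint, h1, hmul, hpos, hD, hz⟩
    exact Stmt16.backward_dir hfg D n hn w hint h1 hmul hpos hD hz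
end
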